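/- (Entropy part of Theorem 1(ii).) Let γ > 1, s₀ ∈ ℝ, let I ⊂ ℝ be a compact interval of positive length, and let w_h : I → ℝ³ be continuous with ρ_h(x) > 0 and p(w_h(x)) > 0 for all x ∈ I. Suppose the average w̄_h satisfies ρ̄_h > 0, p(w̄_h) > 0, q(w̄_h) < 0, and q_max := max_{x∈I} q(w_h(x)) > q(w̄_h). Set θ₃ = (−q(w̄_h))/(q_max − q(w̄_h)). Then for every θ with 0 ≤ θ ≤ min{1, θ₃}, the reconstruction w̃_h(x) = θ·w_h(x) + (1 − θ)·w̄_h satisfies q(w̃_h(x)) ≤ 0 for all x ∈ I. -/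

import Mathlib

open Real MeasureTheory

/-- Pressure of a state `w = (ρ, m, E)` for adiabatic exponent `γ`:
`p(w) = (γ − 1)(E − m²/(2ρ))`. -/
noncomputable def press (γ : ℝ) (w : ℝ × ℝ × ℝ) : ℝ :=
  (γ - 1) * (w.2.2 - w.2.1 ^ 2 / (2 * w.1))

/-- Specific entropy `s(w) = log(p(w)/ρ^γ)`. -/
noncomputable def entr (γ : ℝ) (w : ℝ × ℝ × ℝ) : ℝ :=
  Real.log (press γ w / w.1 ^ γ)

/-- `q(w) = (s₀ − s(w))·ρ`. -/
noncomputable def qf (γ s₀ : ℝ) (w : ℝ × ℝ × ℝ) : ℝ :=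
  (s₀ - entr γ w) * w.1

/-! The entropy function `q` is convex on admissible states. Indeed
`q = s₀ ρ + ρ log (ρ / p) + (γ - 1) ρ log ρ`, where `ρ log (ρ / p)` is the perspective of `-log`,
jointly convex in `(ρ, p)` and antitone in `p`, and `p` is concave because `m² / ρ` is jointly
convex. Hence `q(θ w + (1 - θ) w̄) ≤ θ q_max + (1 - θ) q(w̄)`, which is `≤ 0` as soon as `θ ≤ θ₃`;
`q_max` is a genuine bound because `q ∘ w` is continuous on the compact cell. -/

open Set

theorem convexOn_sq_div :
    ConvexOn ℝ (univ ×ˢ Ioi 0) (fun p : ℝ × ℝ => p.1 ^ 2 / p.2) := by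
  refine ⟨convex_univ.prod (convex_Ioi 0), ?_⟩
  rintro ⟨x₁, y₁⟩ ⟨-, hy₁ : 0 < y₁⟩ ⟨x₂, y₂⟩ ⟨-, hy₂ : 0 < y₂⟩ a b ha hb hab
  simp only [Prod.smul_mk, Prod.mk_add_mk, smul_eq_mul]
  have hy : 0 < a * y₁ + b * y₂ := (convex_Ioi (0 : ℝ)) hy₁ hy₂ ha hb hab
  rw [div_le_iff₀ hy]
  field_simp
  nlinarith [mul_nonneg (mul_nonneg ha hb) (sq_nonneg (x₁ * y₂ - x₂ * y₁))]

theorem convexOn_mul_log_div :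
    ConvexOn ℝ (Ioi 0 ×ˢ Ioi 0) (fun p : ℝ × ℝ => p.1 * log (p.1 / p.2)) := by
  refine ⟨(convex_Ioi 0).prod (convex_Ioi 0), ?_⟩
  rintro ⟨x₁, y₁⟩ ⟨hx₁ : 0 < x₁, hy₁ : 0 < y₁⟩ ⟨x₂, y₂⟩ ⟨hx₂ : 0 < x₂, hy₂ : 0 < y₂⟩ a b ha hb hab
  simp only [Prod.smul_mk, Prod.mk_add_mk, smul_eq_mul]
  set y := a * y₁ + b * y₂
  have hy : 0 < y := (convex_Ioi (0 : ℝ)) hy₁ hy₂ ha hb hab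
  have key := convexOn_mul_log.2 (mem_Ici.2 (div_pos hx₁ hy₁).le) (mem_Ici.2 (div_pos hx₂ hy₂).le)
    (by positivity : 0 ≤ a * y₁ / y) (by positivity : 0 ≤ b * y₂ / y)
    (by rw [← add_div, div_self hy.ne'])
  simp only [smul_eq_mul] at key
  have := mul_le_mul_of_nonneg_left key hy.le
  convert this using 1 <;> field_simp

def admissible (γ : ℝ) : Set (ℝ × ℝ × ℝ) := {w | 0 < w.1 ∧ 0 < press γ w}

section

variable {γ : ℝ}

theorem concaveOn_press (hγ : 1 ≤ γ) : ConcaveOn ℝ {w : ℝ × ℝ × ℝ | 0 < w.1} (press γ) := by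
  refine ⟨(convex_Ioi 0).linear_preimage (LinearMap.fst ℝ ℝ (ℝ × ℝ)), ?_⟩
  intro x (hx : 0 < x.1) y (hy : 0 < y.1) a b ha hb hab
  have hkin := convexOn_sq_div.2 (x := (x.2.1, x.1)) (y := (y.2.1, y.1))
    ⟨trivial, hx⟩ ⟨trivial, hy⟩ ha hb hab
  simp only [Prod.smul_mk, Prod.mk_add_mk, smul_eq_mul] at hkin
  simp only [press, Prod.smul_fst, Prod.smul_snd, Prod.fst_add, Prod.snd_add, smul_eq_mul]
  have half_div : ∀ u v : ℝ, u ^ 2 / (2 * v) = u ^ 2 / v / 2 := fun u v => by ring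
  simp only [half_div]
  nlinarith [mul_le_mul_of_nonneg_left hkin (sub_nonneg.2 hγ)]

theorem convex_admissible (hγ : 1 ≤ γ) : Convex ℝ (admissible γ) :=
  (concaveOn_press hγ).convex_gt 0

theorem qf_eq_of_mem_admissible (s₀ : ℝ) {w : ℝ × ℝ × ℝ} (hw : w ∈ admissible γ) :
    qf γ s₀ w = s₀ * w.1 + w.1 * log (w.1 / press γ w) + (γ - 1) * (w.1 * log w.1) := by
  obtain ⟨hρ, hp⟩ := hw
  rw [qf, entr, log_div hp.ne' (rpow_pos_of_pos hρ γ).ne', log_rpow hρ, log_div hρ.ne' hp.ne']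
  ring

theorem convexOn_qf (hγ : 1 ≤ γ) (s₀ : ℝ) : ConvexOn ℝ (admissible γ) (qf γ s₀) := by
  refine ⟨convex_admissible hγ, fun x hx y hy a b ha hb hab => ?_⟩
  have hz := convex_admissible hγ hx hy ha hb hab
  have hρz : (a • x + b • y).1 = a * x.1 + b * y.1 := rfl
  have hρ_pos : 0 < a * x.1 + b * y.1 := hz.1
  have hp_pos : 0 < a * press γ x + b * press γ y := (convex_Ioi (0 : ℝ)) hx.2 hy.2 ha hb hab
  have hp_le : a * press γ x + b * press γ y ≤ press γ (a • x + b • y) :=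
    (concaveOn_press hγ).2 hx.1 hy.1 ha hb hab
  have hmono : (a * x.1 + b * y.1) * log ((a * x.1 + b * y.1) / press γ (a • x + b • y)) ≤
      (a * x.1 + b * y.1) * log ((a * x.1 + b * y.1) / (a * press γ x + b * press γ y)) := by
    gcongr
    exact div_pos hρ_pos hz.2
  have hpersp := convexOn_mul_log_div.2 (x := (x.1, press γ x)) (y := (y.1, press γ y))
    hx hy ha hb hab
  have hmul_log := convexOn_mul_log.2 (mem_Ici.2 hx.1.le) (mem_Ici.2 hy.1.le) ha hb hab
  simp only [Prod.smul_mk, Prod.mk_add_mk, smul_eq_mul] at hpersp hmul_log ⊢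
  rw [qf_eq_of_mem_admissible s₀ hz, qf_eq_of_mem_admissible s₀ hx,
    qf_eq_of_mem_admissible s₀ hy, hρz]
  linarith [mul_le_mul_of_nonneg_left hmul_log (sub_nonneg.2 hγ)]

theorem continuousOn_qf (s₀ : ℝ) : ContinuousOn (qf γ s₀) (admissible γ) := by
  rintro w ⟨hρ, hp⟩
  have hpress : ContinuousAt (press γ) w := by
    unfold press; fun_prop (disch := positivity)
  have hργ : ContinuousAt (fun w : ℝ × ℝ × ℝ => w.1 ^ γ) w :=
    continuousAt_fst.rpow_const (Or.inl hρ.ne')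
  exact ((continuousAt_const.sub ((hpress.div hργ (rpow_pos_of_pos hρ γ).ne').log
    (div_pos hp (rpow_pos_of_pos hρ γ)).ne')).mul continuousAt_fst).continuousWithinAt

end

theorem limited_entropy_bound_general (γ s₀ a b : ℝ) (hγ : 1 < γ)
    (wh : ℝ → ℝ × ℝ × ℝ) (hwc : ContinuousOn wh (Set.Icc a b))
    (hρ : ∀ x ∈ Set.Icc a b, 0 < (wh x).1)
    (hp : ∀ x ∈ Set.Icc a b, 0 < press γ (wh x))
    (wbar : ℝ × ℝ × ℝ)
    (hρbar : 0 < wbar.1) (hpbar : 0 < press γ wbar)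
    (qmax θ₃ : ℝ)
    (hqmax : qmax = sSup ((fun x => qf γ s₀ (wh x)) '' Set.Icc a b))
    (h2 : qf γ s₀ wbar < qmax)
    (hθ₃ : θ₃ = (-qf γ s₀ wbar) / (qmax - qf γ s₀ wbar))
    (θ : ℝ) (hθ0 : 0 ≤ θ) (hθ : θ ≤ min 1 θ₃) :
    ∀ x ∈ Set.Icc a b, qf γ s₀ (θ • wh x + (1 - θ) • wbar) ≤ 0 := by
  obtain ⟨hθ1, hθθ₃⟩ := le_min_iff.1 hθ
  have hwh : MapsTo wh (Icc a b) (admissible γ) := fun x hx => ⟨hρ x hx, hp x hx⟩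
  have hbdd : BddAbove ((fun x => qf γ s₀ (wh x)) '' Icc a b) :=
    (isCompact_Icc.image_of_continuousOn ((continuousOn_qf s₀).comp hwc hwh)).bddAbove
  have hθq : θ * (qmax - qf γ s₀ wbar) ≤ -qf γ s₀ wbar :=
    (le_div_iff₀ (sub_pos.2 h2)).1 (hθ₃ ▸ hθθ₃)
  intro x hx
  have hq_le : qf γ s₀ (wh x) ≤ qmax := hqmax ▸ le_csSup hbdd ⟨x, hx, rfl⟩
  calc qf γ s₀ (θ • wh x + (1 - θ) • wbar)
      ≤ θ * qf γ s₀ (wh x) + (1 - θ) * qf γ s₀ wbar :=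
        (convexOn_qf hγ.le s₀).2 (hwh hx) ⟨hρbar, hpbar⟩ hθ0 (sub_nonneg.2 hθ1) (by ring)
    _ ≤ θ * qmax + (1 - θ) * qf γ s₀ wbar := by gcongr
    _ ≤ 0 := by linarith

/-- Entropy part of Theorem 1(ii): Under positivity of density and
pressure along the cell, with `q(w̄_h) < 0` and `q_max > q(w̄_h)`, setting
`θ₃ = (−q(w̄_h))/(q_max − q(w̄_h))`, the reconstruction
`w̃_h(x) = θ·w_h(x) + (1 − θ)·w̄_h` satisfies `q(w̃_h(x)) ≤ 0` on `I` whenever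
`0 ≤ θ ≤ min{1, θ₃}`. -/
theorem limited_entropy_bound (γ s₀ a b : ℝ) (hγ : 1 < γ) (hab : a < b)
    (wh : ℝ → ℝ × ℝ × ℝ) (hwc : ContinuousOn wh (Set.Icc a b))
    (hρ : ∀ x ∈ Set.Icc a b, 0 < (wh x).1)
    (hp : ∀ x ∈ Set.Icc a b, 0 < press γ (wh x))
    (wbar : ℝ × ℝ × ℝ) (hwbar : wbar = (b - a)⁻¹ • ∫ x in a..b, wh x)
    (hρbar : 0 < wbar.1) (hpbar : 0 < press γ wbar)
    (qmax θ₃ : ℝ)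
    (hqmax : qmax = sSup ((fun x => qf γ s₀ (wh x)) '' Set.Icc a b))
    (h1 : qf γ s₀ wbar < 0) (h2 : qf γ s₀ wbar < qmax)
    (hθ₃ : θ₃ = (-qf γ s₀ wbar) / (qmax - qf γ s₀ wbar))
    (θ : ℝ) (hθ0 : 0 ≤ θ) (hθ : θ ≤ min 1 θ₃) :
    ∀ x ∈ Set.Icc a b, qf γ s₀ (θ • wh x + (1 - θ) • wbar) ≤ 0 :=
  limited_entropy_bound_general γ s₀ a b hγ wh hwc hρ hp wbar hρbar hpbar qmax θ₃ hqmax h2 hθ₃ θ hθ0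
    hθ
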